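/- arXiv:2107.06628 — 2 statements merged into one kernel-verified Lean document; each statement's English description precedes it below -/
import Mathlib

section
/- Let H₁, H₂ be separable complex Hilbert spaces, H = H₁ ⊗ H₂, and (X, μ) = (X₁ × X₂, μ₁ ⊗ μ₂) the product of measure spaces with σ-finite positive measures. Assume that for j = 1, 2 there exists g_j ∈ H_j with 0 < ∫_{X_j} |⟨g_j, F_j(x_j)⟩|² dμ_j(x_j) < ∞. Then F = F₁ ⊗ F₂ : X → H is a Bessel mapping for H with respect to (X, μ) if and only if F₁ is a Bessel mapping for H₁ with respect to (X₁, μ₁) and F₂ is a Bessel mapping for H₂ with respect to (X₂, μ₂). -/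
open MeasureTheory ENNReal

noncomputable section

namespace ContFrame

variable {X : Type*} {H : Type*}

/-- The paper's inner product `⟨f, g⟩`: linear in the first argument and
conjugate-linear in the second (Mathlib's `inner` is conjugate-linear in the first). -/
def pinner [NormedAddCommGroup H] [InnerProductSpace ℂ H] (f g : H) : ℂ :=
  @inner ℂ _ _ g f

/-- `∫_X |⟨f, F x⟩|² dμ(x)`, as a lower integral. -/
def frameInt [MeasurableSpace X] [NormedAddCommGroup H] [InnerProductSpace ℂ H]
    (μ : Measure X) (F : X → H) (f : H) : ℝ≥0∞ :=
  ∫⁻ x, (‖pinner f (F x)‖₊ : ℝ≥0∞) ^ 2 ∂μ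

/-- `F` is weakly measurable: `x ↦ ⟨f, F x⟩` is μ-measurable for every `f`. -/
def WeaklyMeasurable [MeasurableSpace X] [NormedAddCommGroup H] [InnerProductSpace ℂ H]
    (μ : Measure X) (F : X → H) : Prop :=
  ∀ f : H, AEMeasurable (fun x => pinner f (F x)) μ

/-- `F` is a Bessel mapping for `H` w.r.t. `(X, μ)` with Bessel bound `B < ∞`. -/
def IsBesselMapping [MeasurableSpace X] [NormedAddCommGroup H] [InnerProductSpace ℂ H]
    (μ : Measure X) (F : X → H) (B : ℝ≥0∞) : Prop :=
  B < ⊤ ∧ WeaklyMeasurable μ F ∧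
    ∀ f : H, frameInt μ F f ≤ B * (‖f‖₊ : ℝ≥0∞) ^ 2

/-- `F` is a continuous frame for `H` w.r.t. `(X, μ)` with frame bounds `0 < A ≤ B < ∞`:
`A ‖f‖² ≤ ∫_X |⟨f, F x⟩|² dμ(x) ≤ B ‖f‖²` for all `f ∈ H`. -/
def IsContinuousFrame [MeasurableSpace X] [NormedAddCommGroup H] [InnerProductSpace ℂ H]
    (μ : Measure X) (F : X → H) (A B : ℝ≥0∞) : Prop :=
  0 < A ∧ A ≤ B ∧ B < ⊤ ∧ WeaklyMeasurable μ F ∧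
    ∀ f : H, A * (‖f‖₊ : ℝ≥0∞) ^ 2 ≤ frameInt μ F f ∧
      frameInt μ F f ≤ B * (‖f‖₊ : ℝ≥0∞) ^ 2

/-- A realization of the Hilbert tensor product `H = H₁ ⊗ H₂`: a bilinear map
`tmul` whose simple tensors satisfy `⟪a⊗b, c⊗d⟫ = ⟪a,c⟫⟪b,d⟫` and span a dense subspace. -/
structure HilbertTensorProduct (H₁ H₂ H : Type*)
    [NormedAddCommGroup H₁] [InnerProductSpace ℂ H₁]
    [NormedAddCommGroup H₂] [InnerProductSpace ℂ H₂]
    [NormedAddCommGroup H] [InnerProductSpace ℂ H] where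
  tmul : H₁ →ₗ[ℂ] H₂ →ₗ[ℂ] H
  inner_tmul : ∀ (a c : H₁) (b d : H₂),
    (inner ℂ (tmul a b) (tmul c d) : ℂ) = (inner ℂ a c : ℂ) * (inner ℂ b d : ℂ)
  dense_span : Dense (↑(Submodule.span ℂ {z : H | ∃ a b, z = tmul a b}) : Set H)
/-!
If `F₁ ⊗ F₂` is Bessel with bound `B`, testing it on `g₁ ⊗ f₂` and integrating first over `X₂`
gives `∫|⟨g₁, F₁⟩|² · ∫|⟨f₂, F₂⟩|² ≤ B ‖g₁‖² ‖f₂‖²`, so `F₂` is Bessel with bound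
`B ‖g₁‖² / ∫|⟨g₁, F₁⟩|²`; its weak measurability comes from a section of `⟨g₁ ⊗ f₂, F₁ ⊗ F₂⟩` at a
point where `⟨g₁, F₁⟩ ≠ 0`. Swapping the factors handles `F₁`.

Conversely, every element of the span of simple tensors is a sum `∑ cₖ ⊗ eₖ` with `(eₖ)`
orthonormal. Integrating over `X₂` first, the Bessel inequality of `F₂` bounds the inner integral by
`B₂ ∑ |⟨cₖ, F₁⟩|²`, so the integral is at most `B₁ B₂ ∑ ‖cₖ‖² = B₁ B₂ ‖f‖²`. Fatou's lemma extends
the bound from this dense subspace to all of `H`.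
-/

open Filter Topology

lemma enorm_sq_sum_of_pairwise_inner_eq_zero {𝕜 E ι : Type*} [RCLike 𝕜] [NormedAddCommGroup E]
    [InnerProductSpace 𝕜 E] (s : Finset ι) {v : ι → E}
    (hv : Pairwise fun i j => inner 𝕜 (v i) (v j) = 0) :
    (‖∑ i ∈ s, v i‖₊ : ℝ≥0∞) ^ 2 = ∑ i ∈ s, (‖v i‖₊ : ℝ≥0∞) ^ 2 := by
  classical
  have h : ((‖∑ i ∈ s, v i‖ ^ 2 : ℝ) : 𝕜) = ((∑ i ∈ s, ‖v i‖ ^ 2 : ℝ) : 𝕜) := by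
    push_cast
    simp only [← inner_self_eq_norm_sq_to_K, sum_inner, inner_sum]
    refine Finset.sum_congr rfl fun i hi => Finset.sum_eq_single i (fun j _ hji => hv hji) ?_
    exact fun hi' => absurd hi hi'
  have h' : ‖∑ i ∈ s, v i‖₊ ^ 2 = ∑ i ∈ s, ‖v i‖₊ ^ 2 := NNReal.eq (by push_cast; exact_mod_cast h)
  exact_mod_cast congrArg ((↑) : NNReal → ℝ≥0∞) h'

lemma enorm_sq_sum_smul_orthonormal {E ι : Type*} [NormedAddCommGroup E] [InnerProductSpace ℂ E]
    [Fintype ι] {e : ι → E} (he : Orthonormal ℂ e) (l : ι → ℂ) :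
    (‖∑ k, l k • e k‖₊ : ℝ≥0∞) ^ 2 = ∑ k, (‖l k‖₊ : ℝ≥0∞) ^ 2 := by
  rw [enorm_sq_sum_of_pairwise_inner_eq_zero (𝕜 := ℂ) _ fun k j hkj => by
    dsimp only
    rw [inner_smul_left, inner_smul_right, he.2 hkj, mul_zero, mul_zero]]
  refine Finset.sum_congr rfl fun k _ => ?_
  rw [nnnorm_smul, show ‖e k‖₊ = 1 from NNReal.eq (he.1 k), mul_one]

lemma aemeasurable_of_aemeasurable_prod_mul {X₁ X₂ : Type*} [MeasurableSpace X₁]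
    [MeasurableSpace X₂] {μ₁ : Measure X₁} {μ₂ : Measure X₂} [SFinite μ₂] {u : X₁ → ℂ}
    {v : X₂ → ℂ} (h : AEMeasurable (fun x : X₁ × X₂ => u x.1 * v x.2) (μ₁.prod μ₂))
    (hu : ∃ᵐ x₁ ∂μ₁, u x₁ ≠ 0) : AEMeasurable v μ₂ := by
  obtain ⟨x₁, hsec, hx₁⟩ := (h.aestronglyMeasurable.prodMk_left.and_frequently hu).exists
  simpa [inv_mul_cancel_left₀ hx₁] using hsec.aemeasurable.const_mul (u x₁)⁻¹

section BesselMapping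

variable [MeasurableSpace X] [NormedAddCommGroup H] [InnerProductSpace ℂ H] {μ : Measure X}
    {F : X → H}

lemma frequently_pinner_ne_zero_of_frameInt_pos {g : H} (h : 0 < frameInt μ F g) :
    ∃ᵐ x ∂μ, pinner g (F x) ≠ 0 := by
  by_contra! h0
  refine h.ne' ((lintegral_congr_ae ?_).trans lintegral_zero)
  filter_upwards [h0] with x hx
  simp [hx]

lemma IsBesselMapping.comp_measurePreserving {Y : Type*} [MeasurableSpace Y] {ν : Measure Y}
    {B : ℝ≥0∞} (hF : IsBesselMapping μ F B) {φ : Y → X} (hφ : MeasurePreserving φ ν μ)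
    (hφe : MeasurableEmbedding φ) : IsBesselMapping ν (F ∘ φ) B :=
  ⟨hF.1, fun f => (hF.2.1 f).comp_quasiMeasurePreserving hφ.quasiMeasurePreserving,
    fun f => (hφ.lintegral_comp_emb hφe _).trans_le (hF.2.2 f)⟩

lemma weaklyMeasurable_of_dense_span {S : Set H} (hS : Dense (Submodule.span ℂ S : Set H))
    (h : ∀ f ∈ S, AEMeasurable (fun x => pinner f (F x)) μ) : WeaklyMeasurable μ F := by
  have hspan : ∀ f ∈ Submodule.span ℂ S, AEMeasurable (fun x => pinner f (F x)) μ := by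
    intro f hf
    induction hf using Submodule.span_induction with
    | mem f hf => exact h f hf
    | zero => simp [pinner]
    | add f g _ _ hf hg => simpa only [pinner, inner_add_right, Pi.add_def] using hf.add hg
    | smul c f _ hf => simpa only [pinner, inner_smul_right] using hf.const_mul c
  intro f
  obtain ⟨u, hu, hlim⟩ := mem_closure_iff_seq_limit.1 (hS f)
  exact aemeasurable_of_tendsto_metrizable_ae' (fun n => hspan (u n) (hu n))
    (ae_of_all _ fun x => tendsto_const_nhds.inner hlim)

lemma frameInt_le_of_dense (hF : WeaklyMeasurable μ F) {B : ℝ≥0∞} (hB : B ≠ ⊤) {S : Set H}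
    (hS : Dense S) (h : ∀ f ∈ S, frameInt μ F f ≤ B * (‖f‖₊ : ℝ≥0∞) ^ 2) (f : H) :
    frameInt μ F f ≤ B * (‖f‖₊ : ℝ≥0∞) ^ 2 := by
  obtain ⟨u, hu, hlim⟩ := mem_closure_iff_seq_limit.1 (hS f)
  have hsq : Continuous fun z : ℂ => (‖z‖₊ : ℝ≥0∞) ^ 2 := by fun_prop
  have hsq' : Continuous fun z : H => (‖z‖₊ : ℝ≥0∞) ^ 2 := by fun_prop
  have hpt : ∀ x, Tendsto (fun n => (‖pinner (u n) (F x)‖₊ : ℝ≥0∞) ^ 2) atTop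
      (𝓝 ((‖pinner f (F x)‖₊ : ℝ≥0∞) ^ 2)) := fun x =>
    (hsq.tendsto _).comp (tendsto_const_nhds.inner hlim)
  have hnorm : Tendsto (fun n => B * (‖u n‖₊ : ℝ≥0∞) ^ 2) atTop (𝓝 (B * (‖f‖₊ : ℝ≥0∞) ^ 2)) :=
    ENNReal.Tendsto.const_mul ((hsq'.tendsto f).comp hlim) (.inr hB)
  calc frameInt μ F f
      = ∫⁻ x, liminf (fun n => (‖pinner (u n) (F x)‖₊ : ℝ≥0∞) ^ 2) atTop ∂μ :=
        lintegral_congr fun x => (hpt x).liminf_eq.symm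
    _ ≤ liminf (fun n => frameInt μ F (u n)) atTop :=
        lintegral_liminf_le' fun n => (hF (u n)).nnnorm.coe_nnreal_ennreal.pow_const 2
    _ ≤ liminf (fun n => B * (‖u n‖₊ : ℝ≥0∞) ^ 2) atTop :=
        liminf_le_liminf (.of_forall fun n => h _ (hu n))
    _ = B * (‖f‖₊ : ℝ≥0∞) ^ 2 := hnorm.liminf_eq

end BesselMapping

namespace HilbertTensorProduct

variable {H₁ H₂ : Type*} [NormedAddCommGroup H₁] [InnerProductSpace ℂ H₁]
    [NormedAddCommGroup H₂] [InnerProductSpace ℂ H₂] [NormedAddCommGroup H] [InnerProductSpace ℂ H]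
    (tp : HilbertTensorProduct H₁ H₂ H)

lemma pinner_tmul (a u : H₁) (b w : H₂) :
    pinner (tp.tmul a b) (tp.tmul u w) = pinner a u * pinner b w :=
  tp.inner_tmul u a w b

lemma norm_tmul (a : H₁) (b : H₂) : ‖tp.tmul a b‖ = ‖a‖ * ‖b‖ := by
  have h := inner_self_eq_norm_sq_to_K (𝕜 := ℂ) (tp.tmul a b)
  rw [tp.inner_tmul, inner_self_eq_norm_sq_to_K, inner_self_eq_norm_sq_to_K, ← mul_pow] at h
  exact ((pow_left_inj₀ (by positivity) (norm_nonneg _) two_ne_zero).1 (mod_cast h)).symm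

lemma nnnorm_tmul (a : H₁) (b : H₂) : ‖tp.tmul a b‖₊ = ‖a‖₊ * ‖b‖₊ :=
  NNReal.eq (tp.norm_tmul a b)

def swap : HilbertTensorProduct H₂ H₁ H where
  tmul := tp.tmul.flip
  inner_tmul b d a c := by simp [tp.inner_tmul, mul_comm]
  dense_span := by simpa only [LinearMap.flip_apply, exists_comm (α := H₂)] using tp.dense_span

lemma tmul_eq_sum_orthonormalBasis {ι : Type*} [Fintype ι] {W : Submodule ℂ H₂}
    (e : OrthonormalBasis ι ℂ W) (a : H₁) {w : H₂} (hw : w ∈ W) :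
    tp.tmul a w = ∑ k, tp.tmul (inner ℂ (e k : H₂) w • a) (e k) := by
  have hw' : w = ∑ k, inner ℂ (e k : H₂) w • (e k : H₂) := by
    simpa using (congrArg Subtype.val (e.sum_repr' ⟨w, hw⟩)).symm
  conv_lhs => rw [hw']
  simp [map_sum]

lemma exists_orthonormal_sum_tmul {f : H}
    (hf : f ∈ Submodule.span ℂ {z : H | ∃ a b, z = tp.tmul a b}) :
    ∃ (m : ℕ) (c : Fin m → H₁) (e : Fin m → H₂), Orthonormal ℂ e ∧
      f = ∑ k, tp.tmul (c k) (e k) := by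
  obtain ⟨n, t, g, rfl⟩ := Submodule.mem_span_set'.1 hf
  choose a b hab using fun i => (g i).2
  let W := Submodule.span ℂ (Set.range b)
  have : FiniteDimensional ℂ W := FiniteDimensional.span_of_finite ℂ (Set.finite_range b)
  let e := stdOrthonormalBasis ℂ W
  refine ⟨_, fun k => ∑ i, inner ℂ (e k : H₂) (b i) • t i • a i, fun k => e k,
    e.orthonormal.comp_linearIsometry W.subtypeₗᵢ, ?_⟩
  calc ∑ i, t i • (g i : H)
      = ∑ i, ∑ k, tp.tmul (inner ℂ (e k : H₂) (b i) • t i • a i) (e k) := by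
        refine Finset.sum_congr rfl fun i _ => ?_
        rw [hab, ← LinearMap.smul_apply, ← map_smul]
        exact tp.tmul_eq_sum_orthonormalBasis e _ (Submodule.subset_span ⟨i, rfl⟩)
    _ = _ := by
        rw [Finset.sum_comm]
        simp [map_sum]

lemma enorm_sq_sum_tmul_orthonormal {ι : Type*} [Fintype ι] (c : ι → H₁) {e : ι → H₂}
    (he : Orthonormal ℂ e) :
    (‖∑ k, tp.tmul (c k) (e k)‖₊ : ℝ≥0∞) ^ 2 = ∑ k, (‖c k‖₊ : ℝ≥0∞) ^ 2 := by
  rw [enorm_sq_sum_of_pairwise_inner_eq_zero (𝕜 := ℂ) _ fun k j hkj => by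
    dsimp only
    rw [tp.inner_tmul, he.2 hkj, mul_zero]]
  refine Finset.sum_congr rfl fun k _ => ?_
  rw [tp.nnnorm_tmul, show ‖e k‖₊ = 1 from NNReal.eq (he.1 k), mul_one]

end HilbertTensorProduct

section TensorMap

variable {X₁ X₂ H₁ H₂ : Type*} [MeasurableSpace X₁] [MeasurableSpace X₂]
    [NormedAddCommGroup H₁] [InnerProductSpace ℂ H₁] [NormedAddCommGroup H₂]
    [InnerProductSpace ℂ H₂] [NormedAddCommGroup H] [InnerProductSpace ℂ H]
    (tp : HilbertTensorProduct H₁ H₂ H) {μ₁ : Measure X₁} {μ₂ : Measure X₂}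
    {F₁ : X₁ → H₁} {F₂ : X₂ → H₂}

lemma WeaklyMeasurable.right_of_tmul [SFinite μ₂]
    (hT : WeaklyMeasurable (μ₁.prod μ₂) fun x => tp.tmul (F₁ x.1) (F₂ x.2)) {g₁ : H₁}
    (hg₁ : 0 < frameInt μ₁ F₁ g₁) : WeaklyMeasurable μ₂ F₂ := fun f₂ =>
  aemeasurable_of_aemeasurable_prod_mul (by simpa only [tp.pinner_tmul] using hT (tp.tmul g₁ f₂))
    (frequently_pinner_ne_zero_of_frameInt_pos hg₁)

lemma frameInt_mul_le_frameInt_tmul [SFinite μ₂]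
    (hT : WeaklyMeasurable (μ₁.prod μ₂) fun x => tp.tmul (F₁ x.1) (F₂ x.2)) (f₁ : H₁) (f₂ : H₂) :
    frameInt μ₁ F₁ f₁ * frameInt μ₂ F₂ f₂ ≤
      frameInt (μ₁.prod μ₂) (fun x => tp.tmul (F₁ x.1) (F₂ x.2)) (tp.tmul f₁ f₂) :=
  calc frameInt μ₁ F₁ f₁ * frameInt μ₂ F₂ f₂
      ≤ ∫⁻ x₁, (‖pinner f₁ (F₁ x₁)‖₊ : ℝ≥0∞) ^ 2 * frameInt μ₂ F₂ f₂ ∂μ₁ :=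
        lintegral_mul_const_le _ _
    _ = ∫⁻ x₁, ∫⁻ x₂, (‖pinner f₁ (F₁ x₁)‖₊ : ℝ≥0∞) ^ 2 * (‖pinner f₂ (F₂ x₂)‖₊ : ℝ≥0∞) ^ 2
          ∂μ₂ ∂μ₁ :=
        lintegral_congr fun x₁ => (lintegral_const_mul' _ _ (by simp)).symm
    _ = _ := by
        rw [frameInt, lintegral_prod _ ((hT _).nnnorm.coe_nnreal_ennreal.pow_const 2)]
        simp only [tp.pinner_tmul, nnnorm_mul, ENNReal.coe_mul, mul_pow]

lemma IsBesselMapping.right_of_tmul [SFinite μ₂] {B : ℝ≥0∞}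
    (hB : IsBesselMapping (μ₁.prod μ₂) (fun x => tp.tmul (F₁ x.1) (F₂ x.2)) B) {g₁ : H₁}
    (hpos : 0 < frameInt μ₁ F₁ g₁) (hfin : frameInt μ₁ F₁ g₁ < ⊤) :
    IsBesselMapping μ₂ F₂ (B * (‖g₁‖₊ : ℝ≥0∞) ^ 2 / frameInt μ₁ F₁ g₁) := by
  refine ⟨ENNReal.div_lt_top (by finiteness [hB.1.ne]) hpos.ne', hB.2.1.right_of_tmul tp hpos,
    fun f₂ => ?_⟩
  rw [← ENNReal.mul_div_right_comm, ENNReal.le_div_iff_mul_le (.inl hpos.ne') (.inl hfin.ne),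
    mul_comm]
  calc frameInt μ₁ F₁ g₁ * frameInt μ₂ F₂ f₂
      ≤ frameInt (μ₁.prod μ₂) (fun x => tp.tmul (F₁ x.1) (F₂ x.2)) (tp.tmul g₁ f₂) :=
        frameInt_mul_le_frameInt_tmul tp hB.2.1 g₁ f₂
    _ ≤ B * (‖tp.tmul g₁ f₂‖₊ : ℝ≥0∞) ^ 2 := hB.2.2 _
    _ = B * (‖g₁‖₊ : ℝ≥0∞) ^ 2 * (‖f₂‖₊ : ℝ≥0∞) ^ 2 := by
        rw [tp.nnnorm_tmul, ENNReal.coe_mul, mul_pow, mul_assoc]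

lemma IsBesselMapping.left_of_tmul [SFinite μ₁] [SFinite μ₂] {B : ℝ≥0∞}
    (hB : IsBesselMapping (μ₁.prod μ₂) (fun x => tp.tmul (F₁ x.1) (F₂ x.2)) B) {g₂ : H₂}
    (hpos : 0 < frameInt μ₂ F₂ g₂) (hfin : frameInt μ₂ F₂ g₂ < ⊤) :
    IsBesselMapping μ₁ F₁ (B * (‖g₂‖₊ : ℝ≥0∞) ^ 2 / frameInt μ₂ F₂ g₂) :=
  (hB.comp_measurePreserving Measure.measurePreserving_swap
    MeasurableEquiv.prodComm.measurableEmbedding).right_of_tmul tp.swap hpos hfin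

lemma WeaklyMeasurable.tmul (w₁ : WeaklyMeasurable μ₁ F₁) (w₂ : WeaklyMeasurable μ₂ F₂) :
    WeaklyMeasurable (μ₁.prod μ₂) fun x => tp.tmul (F₁ x.1) (F₂ x.2) := by
  refine weaklyMeasurable_of_dense_span tp.dense_span ?_
  rintro _ ⟨a, b, rfl⟩
  simpa only [tp.pinner_tmul, Pi.mul_def, Function.comp_def] using
    ((w₁ a).comp_quasiMeasurePreserving Measure.quasiMeasurePreserving_fst).mul
      ((w₂ b).comp_quasiMeasurePreserving Measure.quasiMeasurePreserving_snd)

lemma frameInt_sum_tmul_le [SFinite μ₂] {ι : Type*} [Fintype ι] {B₁ B₂ : ℝ≥0∞}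
    (h₁ : IsBesselMapping μ₁ F₁ B₁) (h₂ : IsBesselMapping μ₂ F₂ B₂)
    (hT : WeaklyMeasurable (μ₁.prod μ₂) fun x => tp.tmul (F₁ x.1) (F₂ x.2))
    (c : ι → H₁) {e : ι → H₂} (he : Orthonormal ℂ e) :
    frameInt (μ₁.prod μ₂) (fun x => tp.tmul (F₁ x.1) (F₂ x.2)) (∑ k, tp.tmul (c k) (e k))
      ≤ B₁ * B₂ * (‖∑ k, tp.tmul (c k) (e k)‖₊ : ℝ≥0∞) ^ 2 := by
  have hslice : ∀ u w, pinner (∑ k, tp.tmul (c k) (e k)) (tp.tmul u w)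
      = pinner (∑ k, pinner (c k) u • e k) w := by
    simp [pinner, tp.inner_tmul]
  calc frameInt (μ₁.prod μ₂) (fun x => tp.tmul (F₁ x.1) (F₂ x.2)) (∑ k, tp.tmul (c k) (e k))
      = ∫⁻ x₁, frameInt μ₂ F₂ (∑ k, pinner (c k) (F₁ x₁) • e k) ∂μ₁ := by
        rw [frameInt, lintegral_prod _ ((hT _).nnnorm.coe_nnreal_ennreal.pow_const 2)]
        simp only [hslice]
        rfl
    _ ≤ ∫⁻ x₁, B₂ * ∑ k, (‖pinner (c k) (F₁ x₁)‖₊ : ℝ≥0∞) ^ 2 ∂μ₁ :=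
        lintegral_mono fun x₁ =>
          (h₂.2.2 _).trans_eq (by rw [enorm_sq_sum_smul_orthonormal he])
    _ = B₂ * ∑ k, frameInt μ₁ F₁ (c k) := by
        rw [lintegral_const_mul' _ _ h₂.1.ne, lintegral_finsetSum' _ fun k _ =>
          (h₁.2.1 (c k)).nnnorm.coe_nnreal_ennreal.pow_const 2]
        rfl
    _ ≤ B₂ * ∑ k, B₁ * (‖c k‖₊ : ℝ≥0∞) ^ 2 := by
        gcongr with k
        exact h₁.2.2 (c k)
    _ = B₁ * B₂ * (‖∑ k, tp.tmul (c k) (e k)‖₊ : ℝ≥0∞) ^ 2 := by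
        rw [tp.enorm_sq_sum_tmul_orthonormal c he, ← Finset.mul_sum, ← mul_assoc, mul_comm B₂]

lemma IsBesselMapping.tmul [SFinite μ₂] {B₁ B₂ : ℝ≥0∞} (h₁ : IsBesselMapping μ₁ F₁ B₁)
    (h₂ : IsBesselMapping μ₂ F₂ B₂) :
    IsBesselMapping (μ₁.prod μ₂) (fun x => tp.tmul (F₁ x.1) (F₂ x.2)) (B₁ * B₂) := by
  have hT := h₁.2.1.tmul tp h₂.2.1
  refine ⟨ENNReal.mul_lt_top h₁.1 h₂.1, hT,
    frameInt_le_of_dense hT (ENNReal.mul_ne_top h₁.1.ne h₂.1.ne) tp.dense_span ?_⟩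
  intro f hf
  obtain ⟨m, c, e, he, rfl⟩ := tp.exists_orthonormal_sum_tmul hf
  exact frameInt_sum_tmul_le tp h₁ h₂ hT c he

end TensorMap

theorem tensor_isBessel_iff_general
    {X₁ X₂ : Type*} [MeasurableSpace X₁] [MeasurableSpace X₂]
    {H₁ H₂ H : Type*}
    [NormedAddCommGroup H₁] [InnerProductSpace ℂ H₁]
    [NormedAddCommGroup H₂] [InnerProductSpace ℂ H₂]
    [NormedAddCommGroup H] [InnerProductSpace ℂ H]
    (μ₁ : Measure X₁) (μ₂ : Measure X₂) [SigmaFinite μ₁] [SigmaFinite μ₂]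
    (tp : HilbertTensorProduct H₁ H₂ H)
    (F₁ : X₁ → H₁) (F₂ : X₂ → H₂)
    (hg₁ : ∃ g₁ : H₁, 0 < frameInt μ₁ F₁ g₁ ∧ frameInt μ₁ F₁ g₁ < ⊤)
    (hg₂ : ∃ g₂ : H₂, 0 < frameInt μ₂ F₂ g₂ ∧ frameInt μ₂ F₂ g₂ < ⊤) :
    (∃ B, IsBesselMapping (μ₁.prod μ₂)
        (fun x : X₁ × X₂ => tp.tmul (F₁ x.1) (F₂ x.2)) B) ↔
      (∃ B₁, IsBesselMapping μ₁ F₁ B₁) ∧ (∃ B₂, IsBesselMapping μ₂ F₂ B₂) := by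
  obtain ⟨g₁, hg₁pos, hg₁fin⟩ := hg₁
  obtain ⟨g₂, hg₂pos, hg₂fin⟩ := hg₂
  constructor
  · rintro ⟨B, hB⟩
    exact ⟨⟨_, hB.left_of_tmul tp hg₂pos hg₂fin⟩, ⟨_, hB.right_of_tmul tp hg₁pos hg₁fin⟩⟩
  · rintro ⟨⟨B₁, h₁⟩, ⟨B₂, h₂⟩⟩
    exact ⟨B₁ * B₂, h₁.tmul tp h₂⟩

/-- Assuming the nondegeneracy condition
`0 < ∫_{X_j} |⟨g_j, F_j⟩|² dμ_j < ∞` for some `g_j ∈ H_j`, `F = F₁ ⊗ F₂` is a Bessel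
mapping for `H = H₁ ⊗ H₂` w.r.t. the product measure if and only if `F₁` and `F₂`
are Bessel mappings for `H₁` resp. `H₂`. -/
theorem tensor_isBessel_iff
    {X₁ X₂ : Type*} [MeasurableSpace X₁] [MeasurableSpace X₂]
    {H₁ H₂ H : Type*}
    [NormedAddCommGroup H₁] [InnerProductSpace ℂ H₁] [CompleteSpace H₁]
      [TopologicalSpace.SeparableSpace H₁]
    [NormedAddCommGroup H₂] [InnerProductSpace ℂ H₂] [CompleteSpace H₂]
      [TopologicalSpace.SeparableSpace H₂]
    [NormedAddCommGroup H] [InnerProductSpace ℂ H] [CompleteSpace H]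
      [TopologicalSpace.SeparableSpace H]
    (μ₁ : Measure X₁) (μ₂ : Measure X₂) [SigmaFinite μ₁] [SigmaFinite μ₂]
    (tp : HilbertTensorProduct H₁ H₂ H)
    (F₁ : X₁ → H₁) (F₂ : X₂ → H₂)
    (hg₁ : ∃ g₁ : H₁, 0 < frameInt μ₁ F₁ g₁ ∧ frameInt μ₁ F₁ g₁ < ⊤)
    (hg₂ : ∃ g₂ : H₂, 0 < frameInt μ₂ F₂ g₂ ∧ frameInt μ₂ F₂ g₂ < ⊤) :
    (∃ B, IsBesselMapping (μ₁.prod μ₂)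
        (fun x : X₁ × X₂ => tp.tmul (F₁ x.1) (F₂ x.2)) B) ↔
      (∃ B₁, IsBesselMapping μ₁ F₁ B₁) ∧ (∃ B₂, IsBesselMapping μ₂ F₂ B₂) :=
  tensor_isBessel_iff_general μ₁ μ₂ tp F₁ F₂ hg₁ hg₂

end ContFrame
end
end

section
/- Let H₁, H₂ be separable complex Hilbert spaces, H = H₁ ⊗ H₂, (X, μ) = (X₁ × X₂, μ₁ ⊗ μ₂) the product of measure spaces with σ-finite positive measures, let F and G be Bessel mappings for H with respect to (X, μ) with Bessel bounds B_F and B_G, and let m ∈ L^∞(X, μ). Then the continuous Bessel multiplier M_{m,F,G}, defined weakly by ⟨M_{m,F,G} f, g⟩ = ∫_X m(x) ⟨f, F(x)⟩ ⟨G(x), g⟩ dμ(x), is a well-defined bounded operator on H with ‖M_{m,F,G}‖ ≤ ‖m‖_∞ √(B_F B_G). -/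
open MeasureTheory ENNReal

noncomputable section

namespace ContFrame

variable {X : Type*} {H : Type*}

/-- `M` is the continuous Bessel multiplier `M_{m,F,G}`, defined weakly by
`⟨M f, g⟩ = ∫_X m(x) ⟨f, F x⟩ ⟨G x, g⟩ dμ(x)`. -/
def IsMultiplier {X H : Type*} [MeasurableSpace X]
    [NormedAddCommGroup H] [InnerProductSpace ℂ H]
    (μ : Measure X) (m : X → ℂ) (F G : X → H) (M : H →L[ℂ] H) : Prop :=
  ∀ f g : H, pinner (M f) g = ∫ x, m x * pinner f (F x) * pinner (G x) g ∂μ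

/-!
The form `(f, g) ↦ ∫ m(x) ⟨f, F x⟩ ⟨G x, g⟩ dμ` is sesquilinear, and Hölder's inequality
(`L^∞ · L² · L² ⊆ L¹`) bounds it by `‖m‖_∞ ‖⟨f, F ·⟩‖₂ ‖⟨G ·, g⟩‖₂ ≤ ‖m‖_∞ √B_F ‖f‖ √B_G ‖g‖`,
the `L²` norms being controlled by the Bessel bounds. By the Riesz representation theorem a
bounded sesquilinear form on a Hilbert space is given by an operator of no larger norm.
-/

lemma eLpNorm_one_mul_mul_le {α R : Type*} [MeasurableSpace α] [NormedRing R] {μ : Measure α}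
    {m a b : α → R} (hm : AEStronglyMeasurable m μ) (ha : AEStronglyMeasurable a μ)
    (hb : AEStronglyMeasurable b μ) :
    eLpNorm (m * a * b) 1 μ ≤ eLpNorm m ⊤ μ * eLpNorm a 2 μ * eLpNorm b 2 μ := by
  have hmab : eLpNorm ((m * a) • b) 1 μ ≤ eLpNorm (m * a) 2 μ * eLpNorm b 2 μ :=
    eLpNorm_smul_le_mul_eLpNorm hb (hm.mul ha)
  have hma : eLpNorm (m • a) 2 μ ≤ eLpNorm m ⊤ μ * eLpNorm a 2 μ :=
    eLpNorm_smul_le_mul_eLpNorm ha hm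
  exact hmab.trans (mul_le_mul_left hma _)

section

variable [NormedAddCommGroup H] [InnerProductSpace ℂ H]

open InnerProductSpace in
lemma exists_pinner_eq_of_sesquilinear [CompleteSpace H] (B : H →ₗ⋆[ℂ] H →ₗ[ℂ] ℂ) {D : ℝ}
    (hD : 0 ≤ D) (hB : ∀ g f, ‖B g f‖ ≤ D * ‖g‖ * ‖f‖) :
    ∃ M : H →L[ℂ] H, (∀ f g, pinner (M f) g = B g f) ∧ ‖M‖ ≤ D := by
  set B' := B.mkContinuous₂ D hB
  refine ⟨ContinuousLinearMap.adjoint (continuousLinearMapOfBilin B'), fun f g => ?_, ?_⟩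
  · rw [pinner, ContinuousLinearMap.adjoint_inner_right, continuousLinearMapOfBilin_apply]
    rfl
  · rw [LinearIsometryEquiv.norm_map]
    refine ContinuousLinearMap.opNorm_le_bound _ hD fun g => ?_
    calc ‖continuousLinearMapOfBilin B' g‖ = ‖B' g‖ :=
          LinearIsometryEquiv.norm_map (toDual ℂ H).symm (B' g)
      _ ≤ ‖B'‖ * ‖g‖ := B'.le_opNorm g
      _ ≤ D * ‖g‖ := by gcongr; exact LinearMap.mkContinuous₂_norm_le B hD hB

lemma conj_pinner (f g : H) : starRingEnd ℂ (pinner f g) = pinner g f :=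
  inner_conj_symm f g

lemma pinner_right_eq_star (F : X → H) (f : H) :
    (fun x => pinner (F x) f) = star fun x => pinner f (F x) :=
  funext fun x => (conj_pinner f (F x)).symm

variable [MeasurableSpace X] {μ : Measure X}

lemma frameInt_eq_lintegral_enorm (F : X → H) (f : H) :
    frameInt μ F f = ∫⁻ x, ‖pinner f (F x)‖ₑ ^ 2 ∂μ :=
  rfl

lemma eLpNorm_pinner_left (F : X → H) (f : H) :
    eLpNorm (fun x => pinner f (F x)) 2 μ = frameInt μ F f ^ (1 / 2 : ℝ) := by
  simp [eLpNorm_eq_lintegral_rpow_enorm_toReal two_ne_zero ofNat_ne_top,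
    frameInt_eq_lintegral_enorm]

lemma eLpNorm_pinner_right (F : X → H) (f : H) :
    eLpNorm (fun x => pinner (F x) f) 2 μ = frameInt μ F f ^ (1 / 2 : ℝ) := by
  rw [pinner_right_eq_star, eLpNorm_star, eLpNorm_pinner_left]

end

namespace IsBesselMapping

variable [MeasurableSpace X] [NormedAddCommGroup H] [InnerProductSpace ℂ H]
  {μ : Measure X} {F : X → H} {B : ℝ≥0∞}

lemma rpow_frameInt_le (hF : IsBesselMapping μ F B) (f : H) :
    frameInt μ F f ^ (1 / 2 : ℝ) ≤ B ^ (1 / 2 : ℝ) * ‖f‖ₑ := by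
  calc frameInt μ F f ^ (1 / 2 : ℝ) ≤ (B * ‖f‖ₑ ^ 2) ^ (1 / 2 : ℝ) :=
        ENNReal.rpow_le_rpow (hF.2.2 f) (by norm_num)
    _ = B ^ (1 / 2 : ℝ) * ‖f‖ₑ := by
        rw [ENNReal.mul_rpow_of_nonneg _ _ (by norm_num), ← ENNReal.rpow_natCast,
          ← ENNReal.rpow_mul]
        norm_num

lemma memLp_pinner_left (hF : IsBesselMapping μ F B) (f : H) :
    MemLp (fun x => pinner f (F x)) 2 μ := by
  refine ⟨(hF.2.1 f).aestronglyMeasurable, ?_⟩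
  rw [eLpNorm_pinner_left]
  exact (hF.rpow_frameInt_le f).trans_lt
    (ENNReal.mul_lt_top (ENNReal.rpow_lt_top_of_nonneg (by norm_num) hF.1.ne) enorm_lt_top)

lemma memLp_pinner_right (hF : IsBesselMapping μ F B) (f : H) :
    MemLp (fun x => pinner (F x) f) 2 μ := by
  rw [pinner_right_eq_star]
  exact (hF.memLp_pinner_left f).star

end IsBesselMapping

section Multiplier

variable [MeasurableSpace X] [NormedAddCommGroup H] [InnerProductSpace ℂ H] {μ : Measure X}
  {F G : X → H} {BF BG : ℝ≥0∞} {m : X → ℂ}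

lemma integrable_multiplier_integrand (hF : IsBesselMapping μ F BF)
    (hG : IsBesselMapping μ G BG) (hm : MemLp m ⊤ μ) (f g : H) :
    Integrable (fun x => m x * pinner f (F x) * pinner (G x) g) μ :=
  ((hF.memLp_pinner_left f).mul' (r := 2) hm).integrable_mul (hG.memLp_pinner_right g)

lemma enorm_integral_multiplier_integrand_le (hF : IsBesselMapping μ F BF)
    (hG : IsBesselMapping μ G BG) (hm : AEStronglyMeasurable m μ) (f g : H) :
    ‖∫ x, m x * pinner f (F x) * pinner (G x) g ∂μ‖ₑ ≤
      eLpNorm m ⊤ μ * (BF ^ (1 / 2 : ℝ) * ‖f‖ₑ) * (BG ^ (1 / 2 : ℝ) * ‖g‖ₑ) :=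
  calc ‖∫ x, m x * pinner f (F x) * pinner (G x) g ∂μ‖ₑ
      ≤ eLpNorm (fun x => m x * pinner f (F x) * pinner (G x) g) 1 μ := by
        rw [eLpNorm_one_eq_lintegral_enorm]
        exact enorm_integral_le_lintegral_enorm _
    _ ≤ eLpNorm m ⊤ μ * eLpNorm (fun x => pinner f (F x)) 2 μ *
          eLpNorm (fun x => pinner (G x) g) 2 μ :=
        eLpNorm_one_mul_mul_le hm (hF.memLp_pinner_left f).1 (hG.memLp_pinner_right g).1
    _ ≤ eLpNorm m ⊤ μ * (BF ^ (1 / 2 : ℝ) * ‖f‖ₑ) * (BG ^ (1 / 2 : ℝ) * ‖g‖ₑ) := by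
        rw [eLpNorm_pinner_left, eLpNorm_pinner_right]
        gcongr
        exacts [hF.rpow_frameInt_le f, hG.rpow_frameInt_le g]

lemma norm_integral_multiplier_integrand_le (hF : IsBesselMapping μ F BF)
    (hG : IsBesselMapping μ G BG) (hm : MemLp m ⊤ μ) (f g : H) :
    ‖∫ x, m x * pinner f (F x) * pinner (G x) g ∂μ‖ ≤
      (eLpNorm m ⊤ μ).toReal * √((BF * BG).toReal) * ‖f‖ * ‖g‖ := by
  have hfin : ∀ {B : ℝ≥0∞}, B < ⊤ → ∀ f : H, B ^ (1 / 2 : ℝ) * ‖f‖ₑ ≠ ⊤ := fun hB f =>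
    ENNReal.mul_ne_top (ENNReal.rpow_ne_top_of_nonneg (by norm_num) hB.ne) enorm_ne_top
  have hle := ENNReal.toReal_mono
    (ENNReal.mul_ne_top (ENNReal.mul_ne_top hm.2.ne (hfin hF.1 f)) (hfin hG.1 g))
    (enorm_integral_multiplier_integrand_le hF hG hm.1 f g)
  rw [toReal_enorm] at hle
  refine hle.trans_eq ?_
  simp only [ENNReal.toReal_mul, ← ENNReal.toReal_rpow, ← Real.sqrt_eq_rpow, toReal_enorm,
    Real.sqrt_mul ENNReal.toReal_nonneg]
  ring

lemma exists_isMultiplier [CompleteSpace H] (hF : IsBesselMapping μ F BF)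
    (hG : IsBesselMapping μ G BG) (hm : MemLp m ⊤ μ) :
    ∃ M : H →L[ℂ] H, IsMultiplier μ m F G M ∧
      ‖M‖ ≤ (eLpNorm m ⊤ μ).toReal * √((BF * BG).toReal) := by
  have hint := integrable_multiplier_integrand hF hG hm
  let B : H →ₗ⋆[ℂ] H →ₗ[ℂ] ℂ := LinearMap.mk₂'ₛₗ (starRingEnd ℂ) (RingHom.id ℂ)
    (fun g f => ∫ x, m x * pinner f (F x) * pinner (G x) g ∂μ)
    (fun g g' f => by
      rw [← integral_add (hint f g) (hint f g')]
      simp only [pinner, inner_add_left, mul_add])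
    (fun c g f => by
      rw [smul_eq_mul, ← integral_const_mul]
      congr 1 with x
      simp only [pinner, inner_smul_left]
      ring)
    (fun g f f' => by
      rw [← integral_add (hint f g) (hint f' g)]
      simp only [pinner, inner_add_right, mul_add, add_mul])
    (fun c g f => by
      rw [RingHom.id_apply, smul_eq_mul, ← integral_const_mul]
      congr 1 with x
      simp only [pinner, inner_smul_right]
      ring)
  exact exists_pinner_eq_of_sesquilinear B (by positivity) fun g f =>
    (norm_integral_multiplier_integrand_le hF hG hm f g).trans_eq (by ring)

end Multiplier

theorem multiplier_bounded_general
    {X₁ X₂ : Type*} [MeasurableSpace X₁] [MeasurableSpace X₂]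
    {H : Type*}
    [NormedAddCommGroup H] [InnerProductSpace ℂ H] [CompleteSpace H]
    (μ₁ : Measure X₁) (μ₂ : Measure X₂)
    (F G : X₁ × X₂ → H) (BF BG : ℝ≥0∞)
    (hF : IsBesselMapping (μ₁.prod μ₂) F BF)
    (hG : IsBesselMapping (μ₁.prod μ₂) G BG)
    (m : X₁ × X₂ → ℂ) (hm : MemLp m ⊤ (μ₁.prod μ₂)) :
    ∃ M : H →L[ℂ] H, IsMultiplier (μ₁.prod μ₂) m F G M ∧
      ‖M‖ ≤ (eLpNorm m ⊤ (μ₁.prod μ₂)).toReal * Real.sqrt ((BF * BG).toReal) :=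
  exists_isMultiplier hF hG hm

/-- If `F, G` are Bessel mappings for `H = H₁ ⊗ H₂` w.r.t. the product
measure, with Bessel bounds `B_F, B_G`, and `m ∈ L^∞(X,μ)`, then the continuous Bessel
multiplier `M_{m,F,G}` is a well-defined bounded operator with
`‖M_{m,F,G}‖ ≤ ‖m‖_∞ √(B_F B_G)`. -/
theorem multiplier_bounded
    {X₁ X₂ : Type*} [MeasurableSpace X₁] [MeasurableSpace X₂]
    {H₁ H₂ H : Type*}
    [NormedAddCommGroup H₁] [InnerProductSpace ℂ H₁] [CompleteSpace H₁]
      [TopologicalSpace.SeparableSpace H₁]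
    [NormedAddCommGroup H₂] [InnerProductSpace ℂ H₂] [CompleteSpace H₂]
      [TopologicalSpace.SeparableSpace H₂]
    [NormedAddCommGroup H] [InnerProductSpace ℂ H] [CompleteSpace H]
      [TopologicalSpace.SeparableSpace H]
    (μ₁ : Measure X₁) (μ₂ : Measure X₂) [SigmaFinite μ₁] [SigmaFinite μ₂]
    (tp : HilbertTensorProduct H₁ H₂ H)
    (F G : X₁ × X₂ → H) (BF BG : ℝ≥0∞)
    (hF : IsBesselMapping (μ₁.prod μ₂) F BF)
    (hG : IsBesselMapping (μ₁.prod μ₂) G BG)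
    (m : X₁ × X₂ → ℂ) (hm : MemLp m ⊤ (μ₁.prod μ₂)) :
    ∃ M : H →L[ℂ] H, IsMultiplier (μ₁.prod μ₂) m F G M ∧
      ‖M‖ ≤ (eLpNorm m ⊤ (μ₁.prod μ₂)).toReal * Real.sqrt ((BF * BG).toReal) :=
  multiplier_bounded_general μ₁ μ₂ F G BF BG hF hG m hm

end ContFrame
end
end
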